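/- arXiv:2112.08269 — 2 statements merged into one kernel-verified Lean document; each statement's English description precedes it below -/
import Mathlib

section
/- Let Σ̂ ⊂ ℝ^{m+1} be a smooth double bubble whose sheets meet equi-angularly (ν̂₀ + ν̂₁ + ν̂₂ = 0 on Γ̂), and suppose there exist constants H₀, H₁, H₂ > 0 with H₁ = H₀ + H₂ and a Killing vector field Ẑ such that the mean curvature of each sheet satisfies Ĥ_σ = H_σ + ⟨Ẑ, N̂^σ⟩ pointwise. Then ⟨Ẑ, N̂^σ⟩ ≡ 0 on each sheet, and hence each sheet has constant mean curvature H_σ. -/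
open MeasureTheory
open scoped RealInnerProductSpace


private lemma sq_int_zero {S : Type*} [TopologicalSpace S] [MeasurableSpace S]
    {μ : Measure S} [μ.IsOpenPosMeasure] {f : S → ℝ}
    (hf : Continuous f) (hint : Integrable (fun x => f x ^ 2) μ)
    (hz : (∫ x, f x ^ 2 ∂μ) = 0) : ∀ x, f x = 0 := by
  have hae : (fun x => f x ^ 2) =ᵐ[μ] 0 :=
    (integral_eq_zero_iff_of_nonneg (fun x => sq_nonneg _) hint).mp hz
  have hcont : Continuous fun x => f x ^ 2 := hf.pow 2
  have heq : (fun x => f x ^ 2) = 0 :=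
    (Continuous.ae_eq_iff_eq μ hcont continuous_const).mp hae
  intro x
  have := congrFun heq x
  simpa [pow_eq_zero_iff] using this

/-- a smooth double bubble in `ℝ^{m+1}` whose sheets meet
equi-angularly (`ν̂₀+ν̂₁+ν̂₂ = 0` on `Γ̂`) and whose sheetwise mean curvatures are
`Ĥ_σ = H_σ + ⟪Ẑ, N̂^σ⟫` for constants `H₀, H₁, H₂ > 0` with `H₁ = H₀ + H₂` and
a Killing field `Ẑ`, must have `⟪Ẑ, N̂^σ⟫ ≡ 0` on every sheet; hence each sheet
has constant mean curvature `H_σ`.  The sheets carry their area measures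
(positive on nonempty open sets), the normal components of `Ẑ` are continuous,
square-integrable, and the first-variation identity for the Killing field `Ẑ`
(see STATEMENT 10) is recorded as the hypothesis `hvar`. -/
theorem stmt_11 {E S0 S1 S2 Γ : Type*}
    [NormedAddCommGroup E] [InnerProductSpace ℝ E]
    [TopologicalSpace S0] [TopologicalSpace S1] [TopologicalSpace S2]
    [MeasurableSpace S0] [MeasurableSpace S1] [MeasurableSpace S2] [MeasurableSpace Γ]
    (μ0 : Measure S0) (μ1 : Measure S1) (μ2 : Measure S2) (μΓ : Measure Γ)
    [μ0.IsOpenPosMeasure] [μ1.IsOpenPosMeasure] [μ2.IsOpenPosMeasure]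
    (H0 H1 H2 : ℝ) (h0 : 0 < H0) (h1 : 0 < H1) (h2 : 0 < H2)
    (hbal : H1 = H0 + H2)
    (N0 : S0 → E) (N1 : S1 → E) (N2 : S2 → E) (ν0 ν1 ν2 : Γ → E)
    (Hc0 : S0 → ℝ) (Hc1 : S1 → ℝ) (Hc2 : S2 → ℝ)
    (Z0 : S0 → E) (Z1 : S1 → E) (Z2 : S2 → E) (ZΓ : Γ → E)
    (hcont0 : Continuous fun x => ⟪Z0 x, N0 x⟫)
    (hcont1 : Continuous fun x => ⟪Z1 x, N1 x⟫)
    (hcont2 : Continuous fun x => ⟪Z2 x, N2 x⟫)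
    (hint0 : Integrable (fun x => ⟪Z0 x, N0 x⟫ ^ 2) μ0)
    (hint1 : Integrable (fun x => ⟪Z1 x, N1 x⟫ ^ 2) μ1)
    (hint2 : Integrable (fun x => ⟪Z2 x, N2 x⟫ ^ 2) μ2)
    (hH0 : ∀ x, Hc0 x = H0 + ⟪Z0 x, N0 x⟫)
    (hH1 : ∀ x, Hc1 x = H1 + ⟪Z1 x, N1 x⟫)
    (hH2 : ∀ x, Hc2 x = H2 + ⟪Z2 x, N2 x⟫)
    (hequi : ∀ b, ν0 b + ν1 b + ν2 b = 0)
    (hvar : (∫ x, (H0 - Hc0 x) * ⟪Z0 x, N0 x⟫ ∂μ0) +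
            (∫ x, (H1 - Hc1 x) * ⟪Z1 x, N1 x⟫ ∂μ1) +
            (∫ x, (H2 - Hc2 x) * ⟪Z2 x, N2 x⟫ ∂μ2) -
            (∫ b, ⟪ZΓ b, ν0 b + ν1 b + ν2 b⟫ ∂μΓ) = 0) :
    (∀ x, ⟪Z0 x, N0 x⟫ = 0) ∧ (∀ x, ⟪Z1 x, N1 x⟫ = 0) ∧ (∀ x, ⟪Z2 x, N2 x⟫ = 0) ∧
    (∀ x, Hc0 x = H0) ∧ (∀ x, Hc1 x = H1) ∧ (∀ x, Hc2 x = H2) := by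
  have e0 : ∀ x, H0 - Hc0 x = -⟪Z0 x, N0 x⟫ := fun x => by rw [hH0 x]; ring
  have e1 : ∀ x, H1 - Hc1 x = -⟪Z1 x, N1 x⟫ := fun x => by rw [hH1 x]; ring
  have e2 : ∀ x, H2 - Hc2 x = -⟪Z2 x, N2 x⟫ := fun x => by rw [hH2 x]; ring
  have key : (∫ x, ⟪Z0 x, N0 x⟫ ^ 2 ∂μ0) + (∫ x, ⟪Z1 x, N1 x⟫ ^ 2 ∂μ1) +
      (∫ x, ⟪Z2 x, N2 x⟫ ^ 2 ∂μ2) = 0 := by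
    have h0' : (∫ x, (H0 - Hc0 x) * ⟪Z0 x, N0 x⟫ ∂μ0) = -∫ x, ⟪Z0 x, N0 x⟫ ^ 2 ∂μ0 := by
      rw [← integral_neg]; congr 1; funext x; rw [e0 x]; ring
    have h1' : (∫ x, (H1 - Hc1 x) * ⟪Z1 x, N1 x⟫ ∂μ1) = -∫ x, ⟪Z1 x, N1 x⟫ ^ 2 ∂μ1 := by
      rw [← integral_neg]; congr 1; funext x; rw [e1 x]; ring
    have h2' : (∫ x, (H2 - Hc2 x) * ⟪Z2 x, N2 x⟫ ∂μ2) = -∫ x, ⟪Z2 x, N2 x⟫ ^ 2 ∂μ2 := by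
      rw [← integral_neg]; congr 1; funext x; rw [e2 x]; ring
    have hb : (∫ b, ⟪ZΓ b, ν0 b + ν1 b + ν2 b⟫ ∂μΓ) = 0 := by
      simp [hequi]
    rw [h0', h1', h2', hb] at hvar
    linarith
  have i0 : 0 ≤ ∫ x, ⟪Z0 x, N0 x⟫ ^ 2 ∂μ0 := integral_nonneg fun x => sq_nonneg _
  have i1 : 0 ≤ ∫ x, ⟪Z1 x, N1 x⟫ ^ 2 ∂μ1 := integral_nonneg fun x => sq_nonneg _
  have i2 : 0 ≤ ∫ x, ⟪Z2 x, N2 x⟫ ^ 2 ∂μ2 := integral_nonneg fun x => sq_nonneg _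
  have z0 := sq_int_zero hcont0 hint0 (by linarith)
  have z1 := sq_int_zero hcont1 hint1 (by linarith)
  have z2 := sq_int_zero hcont2 hint2 (by linarith)
  exact ⟨z0, z1, z2, fun x => by rw [hH0 x, z0 x]; ring,
    fun x => by rw [hH1 x, z1 x]; ring, fun x => by rw [hH2 x, z2 x]; ring⟩
end

section
/- For the symmetric standard double bubble in ℝ^{m+1} with sheet radius R, the (m+1)-dimensional volume of each enclosed chamber equals V = ω_m R^{m+1} I_{m+1}(2π/3), where I_{m+1}(x) = ∫₀ˣ sin^{m+1}(t) dt and ω_m is the volume of the m-dimensional unit ball. -/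
/-!
Slice perpendicular to the axis `eᵢ`: the slice of the ball `‖x‖ ≤ R` at height `t` is an
`m`-ball of radius `√(R² - t²)`, so the cap `{‖x‖ ≤ R, xᵢ ≥ R cos θ}` has volume
`ω_m ∫_{R cos θ}^R (R² - t²)^{m/2} dt`, and the substitution `t = R cos φ` turns this into
`ω_m R^{m+1} ∫_0^θ sin^{m+1} φ dφ`. A chamber is such a cap (translated) with `θ = 2π/3`, because
its centre lies at height `R/2 = -R cos (2π/3)` above the cutting hyperplane.
-/

open MeasureTheory

noncomputable def Ifun (k : ℕ) (x : ℝ) : ℝ := ∫ t in (0:ℝ)..x, Real.sin t ^ k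

noncomputable def unitBallVol (m : ℕ) : ℝ :=
  (volume (Metric.ball (0 : EuclideanSpace ℝ (Fin m)) 1)).toReal

open Metric Real

theorem Real.cos_two_pi_div_three : cos (2 * π / 3) = -(1 / 2) := by
  rw [show 2 * π / 3 = π - π / 3 by ring, cos_pi_sub, cos_pi_div_three]

theorem volume_prod_setOf_norm_le {E : Type*} [NormedAddCommGroup E] [NormedSpace ℝ E]
    [FiniteDimensional ℝ E] [MeasurableSpace E] [BorelSpace E] (μ : Measure E)
    [μ.IsAddHaarMeasure] {s : Set ℝ} (hs : MeasurableSet s) {r : ℝ → ℝ} (hr : Measurable r)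
    (hr₀ : ∀ t ∈ s, 0 ≤ r t) :
    (volume.prod μ) {p : ℝ × E | p.1 ∈ s ∧ ‖p.2‖ ≤ r p.1} =
      (∫⁻ t in s, ENNReal.ofReal (r t ^ Module.finrank ℝ E)) * μ (ball 0 1) := by
  have hmeas : MeasurableSet {p : ℝ × E | p.1 ∈ s ∧ ‖p.2‖ ≤ r p.1} :=
    (measurable_fst hs).inter (measurableSet_le measurable_snd.norm (hr.comp measurable_fst))
  rw [Measure.prod_apply hmeas, ← lintegral_mul_const' _ _ measure_ball_lt_top.ne,
    ← lintegral_indicator hs]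
  refine lintegral_congr fun t => ?_
  by_cases ht : t ∈ s
  · have hslice : Prod.mk t ⁻¹' {p : ℝ × E | p.1 ∈ s ∧ ‖p.2‖ ≤ r p.1} = closedBall 0 (r t) := by
      ext y; simp [ht]
    rw [hslice, Set.indicator_of_mem ht, Measure.addHaar_closedBall _ _ (hr₀ t ht)]
  · simp [ht]

theorem integral_sqrt_sq_sub_sq_pow (m : ℕ) {R : ℝ} (hR : 0 ≤ R) {θ : ℝ}
    (hθ₀ : 0 ≤ θ) (hθπ : θ ≤ π) :
    ∫ t in (R * cos θ)..R, √(R ^ 2 - t ^ 2) ^ m = R ^ (m + 1) * Ifun (m + 1) θ := by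
  have hsubst := intervalIntegral.integral_comp_mul_deriv (a := θ) (b := 0)
    (f := fun φ => R * cos φ) (f' := fun φ => -(R * sin φ))
    (g := fun t => √(R ^ 2 - t ^ 2) ^ m)
    (fun φ _ => ((hasDerivAt_cos φ).const_mul R).congr_deriv (by ring))
    (by fun_prop) (by fun_prop)
  simp only [cos_zero, mul_one] at hsubst
  rw [← hsubst, intervalIntegral.integral_symm, Ifun, ← intervalIntegral.integral_const_mul,
    ← intervalIntegral.integral_neg]
  refine intervalIntegral.integral_congr fun φ hφ => ?_
  rw [Set.uIcc_of_le hθ₀] at hφ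
  have hsin : 0 ≤ sin φ := sin_nonneg_of_nonneg_of_le_pi hφ.1 (hφ.2.trans hθπ)
  have hsq : R ^ 2 - (R * cos φ) ^ 2 = (R * sin φ) ^ 2 := by
    linear_combination (-R ^ 2) * sin_sq_add_cos_sq φ
  simp only [Function.comp_apply, hsq, sqrt_sq (mul_nonneg hR hsin)]
  ring

namespace EuclideanSpace

variable {n : ℕ}

def splitAt (i : Fin (n + 1)) (x : EuclideanSpace ℝ (Fin (n + 1))) :
    ℝ × EuclideanSpace ℝ (Fin n) :=
  (x i, WithLp.toLp 2 (i.removeNth x))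

theorem measurePreserving_splitAt (i : Fin (n + 1)) :
    MeasurePreserving (splitAt i) volume (volume.prod volume) :=
  ((MeasurePreserving.id volume).prod (PiLp.volume_preserving_toLp (Fin n))).comp
    ((volume_preserving_piFinSuccAbove (fun _ => ℝ) i).comp (PiLp.volume_preserving_ofLp _))

theorem norm_sq_eq_sq_add_norm_sq_splitAt (i : Fin (n + 1)) (x : EuclideanSpace ℝ (Fin (n + 1))) :
    ‖x‖ ^ 2 = (splitAt i x).1 ^ 2 + ‖(splitAt i x).2‖ ^ 2 := by
  simp [splitAt, EuclideanSpace.norm_sq_eq, Fin.sum_univ_succAbove _ i, Fin.removeNth]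

theorem setOf_norm_le_and_le_apply_eq_preimage_splitAt (i : Fin (n + 1)) {R c : ℝ}
    (hR : 0 ≤ R) (hc : -R ≤ c) :
    {x : EuclideanSpace ℝ (Fin (n + 1)) | ‖x‖ ≤ R ∧ c ≤ x i} =
      splitAt i ⁻¹' {p | p.1 ∈ Set.Icc c R ∧ ‖p.2‖ ≤ √(R ^ 2 - p.1 ^ 2)} := by
  ext x
  have hx := norm_sq_eq_sq_add_norm_sq_splitAt i x
  change _ ∧ _ ≤ (splitAt i x).1 ↔ splitAt i x ∈ (_ : Set (ℝ × _))
  generalize splitAt i x = p at hx ⊢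
  obtain ⟨t, y⟩ := p
  simp only [Set.mem_Icc] at hx ⊢
  constructor
  · rintro ⟨hxR, ht⟩
    have hsq : t ^ 2 + ‖y‖ ^ 2 ≤ R ^ 2 := hx ▸ pow_le_pow_left₀ (norm_nonneg x) hxR 2
    exact ⟨⟨ht, by nlinarith⟩, (le_sqrt (norm_nonneg y) (by nlinarith)).2 (by linarith)⟩
  · rintro ⟨⟨ht, htR⟩, hy⟩
    have hsq : ‖y‖ ^ 2 ≤ R ^ 2 - t ^ 2 := (le_sqrt (norm_nonneg y) (by nlinarith)).1 hy
    exact ⟨by nlinarith [norm_nonneg x], ht⟩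

theorem volume_setOf_norm_le_and_le_apply (i : Fin (n + 1)) {R : ℝ} (hR : 0 ≤ R)
    {θ : ℝ} (hθ₀ : 0 ≤ θ) (hθπ : θ ≤ π) :
    (volume {x : EuclideanSpace ℝ (Fin (n + 1)) | ‖x‖ ≤ R ∧ R * cos θ ≤ x i}).toReal =
      unitBallVol n * R ^ (n + 1) * Ifun (n + 1) θ := by
  have hcos : -R ≤ R * cos θ := by nlinarith [neg_one_le_cos θ]
  have hcosR : R * cos θ ≤ R := by nlinarith [cos_le_one θ]
  have hmeas : MeasurableSet {p : ℝ × EuclideanSpace ℝ (Fin n) |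
      p.1 ∈ Set.Icc (R * cos θ) R ∧ ‖p.2‖ ≤ √(R ^ 2 - p.1 ^ 2)} :=
    (measurable_fst measurableSet_Icc).inter (measurableSet_le measurable_snd.norm (by fun_prop))
  rw [setOf_norm_le_and_le_apply_eq_preimage_splitAt i hR hcos,
    (measurePreserving_splitAt i).measure_preimage hmeas.nullMeasurableSet,
    volume_prod_setOf_norm_le (r := fun t => √(R ^ 2 - t ^ 2)) _ measurableSet_Icc
      (by fun_prop) (fun _ _ => sqrt_nonneg _),
    ENNReal.toReal_mul,
    ← integral_eq_lintegral_of_nonneg_ae (ae_of_all _ fun _ => by positivity) (by fun_prop),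
    finrank_euclideanSpace_fin, integral_Icc_eq_integral_Ioc,
    ← intervalIntegral.integral_of_le hcosR, integral_sqrt_sq_sub_sq_pow n hR hθ₀ hθπ,
    unitBallVol]
  ring

theorem volume_setOf_norm_sub_le_and_le_apply (c : EuclideanSpace ℝ (Fin (n + 1)))
    (i : Fin (n + 1)) {R : ℝ} (hR : 0 ≤ R) {θ : ℝ} (hθ₀ : 0 ≤ θ) (hθπ : θ ≤ π) :
    (volume {x : EuclideanSpace ℝ (Fin (n + 1)) | ‖x - c‖ ≤ R ∧ c i + R * cos θ ≤ x i}).toReal =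
      unitBallVol n * R ^ (n + 1) * Ifun (n + 1) θ := by
  have htrans : {x : EuclideanSpace ℝ (Fin (n + 1)) | ‖x - c‖ ≤ R ∧ c i + R * cos θ ≤ x i} =
      (· + -c) ⁻¹' {x | ‖x‖ ≤ R ∧ R * cos θ ≤ x i} := by
    ext x
    simp [← sub_eq_add_neg, le_sub_iff_add_le']
  rw [htrans, measure_preimage_add_right, volume_setOf_norm_le_and_le_apply i hR hθ₀ hθπ]

end EuclideanSpace

/-- the volume of each chamber of the symmetric standard double
bubble in `ℝ^{m+1}` with sheet radius `R` equals `ω_m R^{m+1} I_{m+1}(2π/3)`.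
The chamber is the region bounded by the spherical cap of radius `R` centered
at `(R/2)e_{m+1}` (opening angle `2π/3`) and by the flat disk in the
hyperplane `{x_{m+1} = 0}` through the cap's boundary circle. -/
theorem stmt_12 (m : ℕ) (R : ℝ) (hR : 0 < R) :
    (volume {x : EuclideanSpace ℝ (Fin (m+1)) |
        ‖x - (R/2) • EuclideanSpace.single (Fin.last m) (1:ℝ)‖ ≤ R ∧
        0 ≤ x (Fin.last m)}).toReal =
      unitBallVol m * R ^ (m+1) * Ifun (m+1) (2 * Real.pi / 3) := by
  have hcut : ((R / 2) • EuclideanSpace.single (Fin.last m) (1 : ℝ)) (Fin.last m) +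
      R * cos (2 * π / 3) = 0 := by
    rw [PiLp.smul_apply, PiLp.single_eq_same, smul_eq_mul, cos_two_pi_div_three]
    ring
  rw [← EuclideanSpace.volume_setOf_norm_sub_le_and_le_apply _ (Fin.last m) hR.le
    (by positivity) (by linarith [pi_pos]), hcut]
end
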